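/- (Safe return home, Theorem 1) Consider the penguin parade model on ℝ with home located at H > 0. Suppose that at some time t₀ ≥ 0: (a) ε + inf_{(r,t) ∈ ℝ×[t₀,∞)} f(r,t) ≥ ι for some ι > 0, and (b) the rearmost group satisfies w₁(t₀) ≥ 2. Then there exists T ∈ [t₀, t₀ + (H - p₁(t₀))/ι] such that all penguins have reached home at time T, i.e., 𝒩(T) = ℳ, where 𝒩(t) = Σ_{j : pⱼ(t) = H} wⱼ(t) and ℳ is the total number of penguins. -/
import Mathlib


open Set Finset

/-- Safe return home (Theorem 1 of the paper). In the penguin parade model, if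
at some time t₀ the drift ε plus the infimum of the environment term f is at
least ι > 0, and the rearmost group contains at least two penguins, then all ℳ
penguins reach the home H by some time T ∈ [t₀, t₀ + (H - p₁(t₀))/ι].

The model is encoded through: the group count n(t), positions p(t,j) and
weights w(t,j) (j = 0 is the rearmost group), the panic factors P(t,j) ∈ [0,1]
(equal to 1 for groups of size ≥ 2), the strategic velocities V(t,j)
(nonnegative for the rearmost group), the equation of motion for the rearmost
trajectory before arrival, the preserved ordering, the absorbing home, and the
conservation of the total number ℳ of penguins. -/
theorem safe_return_home_1
    (H ε ι t₀ : ℝ) (f : ℝ → ℝ → ℝ)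
    (n : ℝ → ℕ) (p : ℝ → ℕ → ℝ) (w : ℝ → ℕ → ℕ)
    (P V : ℝ → ℕ → ℝ) (ℳ : ℕ)
    (hH : 0 < H) (hι : 0 < ι) (ht₀ : 0 ≤ t₀)
    -- hypothesis (a): ε + inf f ≥ ι on ℝ × [t₀,∞)
    (hf : ∀ r t : ℝ, t₀ ≤ t → ι ≤ ε + f r t)
    -- hypothesis (b): the rearmost group has at least two penguins at time t₀
    (hw2 : 2 ≤ w t₀ 0)
    -- model: weights of the rearmost group are nondecreasing under merging
    (hwmono : ∀ s t : ℝ, t₀ ≤ s → s ≤ t → w s 0 ≤ w t 0)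
    -- model: a group with at least two penguins has panic factor 1
    (hP1 : ∀ t : ℝ, t₀ ≤ t → 2 ≤ w t 0 → P t 0 = 1)
    -- model: panic factors lie in [0,1]
    (hP01 : ∀ t : ℝ, ∀ j, P t j ∈ Icc (0 : ℝ) 1)
    -- model: the rearmost strategic velocity is nonnegative
    (hV : ∀ t : ℝ, t₀ ≤ t → 0 ≤ V t 0)
    -- equation of motion for the rearmost group before arrival
    (hODE : ∀ t : ℝ, t₀ ≤ t → p t 0 < H →
      HasDerivAt (fun τ => p τ 0) (P t 0 * (ε + V t 0) + f (p t 0) t) t)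
    (hcont : ContinuousOn (fun t => p t 0) (Ici t₀))
    -- model: ordering is preserved and home is the final position
    (horder : ∀ t : ℝ, t₀ ≤ t → ∀ j, j < n t → p t 0 ≤ p t j)
    (hcap : ∀ t : ℝ, t₀ ≤ t → ∀ j, j < n t → p t j ≤ H)
    (hstart : p t₀ 0 ≤ H)
    -- conservation of the total number of penguins
    (hM : ∀ t : ℝ, t₀ ≤ t → ∑ j ∈ Finset.range (n t), w t j = ℳ) :
    ∃ T ∈ Icc t₀ (t₀ + (H - p t₀ 0) / ι),
      (∑ j ∈ Finset.range (n T), if p T j = H then w T j else 0) = ℳ := by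

  set g : ℝ → ℝ := fun t => p t 0 with hg
  have hdivnn : 0 ≤ (H - g t₀) / ι := div_nonneg (by simp only [hg]; linarith) hι.le
  set T := t₀ + (H - g t₀) / ι with hTdef
  have hT0 : t₀ ≤ T := by simp only [hTdef]; linarith
  have hHT : g t₀ + ι * (T - t₀) = H := by
    have h1 : ι * ((H - g t₀) / ι) = H - g t₀ := by
      field_simp
    simp only [hTdef]; rw [add_sub_cancel_left, h1]; ring
  -- auxiliary growth estimate
  have aux : ∀ a b : ℝ, t₀ ≤ a → a ≤ b → (∀ x ∈ Ioo a b, g x < H) →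
      g a + ι * (b - a) ≤ g b := by
    intro a b ha hab hlt
    have hIcc : Icc a b ⊆ Ici t₀ := fun x hx => le_trans ha hx.1
    have hder : ∀ x ∈ interior (Icc a b),
        HasDerivAt (fun t => g t - ι * t) (P x 0 * (ε + V x 0) + f (g x) x - ι) x := by
      intro x hx
      rw [interior_Icc] at hx
      have hx0 : t₀ ≤ x := le_trans ha hx.1.le
      have hd := hODE x hx0 (hlt x hx)
      exact hd.sub (by simpa using (hasDerivAt_id x).const_mul ι)
    have hdnn : ∀ x ∈ interior (Icc a b),
        0 ≤ P x 0 * (ε + V x 0) + f (g x) x - ι := by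
      intro x hx
      rw [interior_Icc] at hx
      have hx0 : t₀ ≤ x := le_trans ha hx.1.le
      have hP : P x 0 = 1 := hP1 x hx0 (le_trans hw2 (hwmono t₀ x le_rfl hx0))
      have h1 := hf (g x) x hx0
      have h2 := hV x hx0
      rw [hP, one_mul]
      linarith
    have hmono : MonotoneOn (fun t => g t - ι * t) (Icc a b) := by
      apply monotoneOn_of_deriv_nonneg (convex_Icc a b)
      · exact (hcont.mono hIcc).sub (continuous_const.mul continuous_id).continuousOn
      · exact fun x hx => ((hder x hx).differentiableAt).differentiableWithinAt
      · intro x hx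
        rw [(hder x hx).deriv]
        exact hdnn x hx
    have := hmono (left_mem_Icc.mpr hab) (right_mem_Icc.mpr hab) hab
    simp only at this
    linarith
  have hmain : H ≤ g T := by
    by_contra hltT
    push_neg at hltT
    have htT : t₀ < T := by
      rcases lt_or_eq_of_le hT0 with h | h
      · exact h
      · exfalso; rw [← h] at hHT hltT; simp at hHT; linarith
    set A := Icc t₀ T ∩ g ⁻¹' (Ici H) with hA
    by_cases hne : A.Nonempty
    · have hAclosed : IsClosed A :=
        (hcont.mono (Icc_subset_Ici_self)).preimage_isClosed_of_isClosed isClosed_Icc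
          isClosed_Ici
      have hbdd : BddAbove A := BddAbove.mono (Set.inter_subset_left) bddAbove_Icc
      set v := sSup A with hv
      have hvA : v ∈ A := hAclosed.csSup_mem hne hbdd
      have hvIcc : v ∈ Icc t₀ T := hvA.1
      have hvH : H ≤ g v := hvA.2
      have hvT : v < T := lt_of_le_of_ne hvIcc.2 (fun h => by rw [h] at hvH; linarith)
      have hIoo : ∀ x ∈ Ioo v T, g x < H := by
        intro x hx
        by_contra hge
        push_neg at hge
        have hxA : x ∈ A := ⟨⟨le_trans hvIcc.1 hx.1.le, hx.2.le⟩, hge⟩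
        exact absurd (le_csSup hbdd hxA) (not_le.mpr hx.1)
      have := aux v T hvIcc.1 hvT.le hIoo
      nlinarith
    · have hIoo : ∀ x ∈ Ioo t₀ T, g x < H := by
        intro x hx
        by_contra hge
        push_neg at hge
        exact hne ⟨x, ⟨hx.1.le, hx.2.le⟩, hge⟩
      have := aux t₀ T le_rfl hT0 hIoo
      linarith
  refine ⟨T, ⟨hT0, le_rfl⟩, ?_⟩
  by_cases hn : n T = 0
  · have := hM T hT0
    rw [hn] at this ⊢
    simpa using this
  · have hnpos : 0 < n T := Nat.pos_of_ne_zero hn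
    rw [Finset.sum_congr rfl (fun j hj => ?_)]
    · exact hM T hT0
    · rw [Finset.mem_range] at hj
      have h1 : p T j ≤ H := hcap T hT0 j hj
      have h2 : H ≤ p T j := le_trans hmain (horder T hT0 j hj)
      rw [if_pos (le_antisymm h1 h2)]
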